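/- arXiv:1602.05058 — 2 statements merged into one kernel-verified Lean document; each statement's English description precedes it below -/
import Mathlib

section
/- Let z0 lie in the upper half-plane H with Re(z0) = 0. Then the value range V_𝓘(z0) = {f(z0) : f ∈ 𝓘} equals the vertical ray {z0 + i·t : t ∈ [0,∞)}. -/
/-!
Symmetry forces a map `f ∈ 𝓘` to send the imaginary axis into itself, and the hydrodynamic
normalization gives `Im f(iy) / y → 1` as `y → ∞`. Julia's lemma at `∞` — the Schwarz–Pick
inequality between `z` and `iR`, letting `R → ∞` — then yields `Im f(z) ≥ Im z`, so `f(z0)` lies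
on the ray. Conversely, the slit map `z ↦ √(z² - s)` belongs to `𝓘` and sends `ib` to
`i√(b² + s)`, which reaches every point of the ray above `z0 = ib`.
-/

open Complex Set Filter Topology

noncomputable section

/-- The upper half-plane. -/
def UHP : Set ℂ := {z : ℂ | 0 < z.im}

/-- Hydrodynamic normalization at infinity: there is `c ≥ 0` (the half-plane capacity)
such that `z * (f z - z) → -c` as `|z| → ∞` within each sector `{Im z ≥ ε * |z|}`. -/
def HydroNorm (f : ℂ → ℂ) : Prop :=
  ∃ c : ℝ, 0 ≤ c ∧ ∀ ε : ℝ, 0 < ε →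
    Tendsto (fun z : ℂ => z * (f z - z))
      (comap (fun z : ℂ => ‖z‖) atTop ⊓ 𝓟 {z : ℂ | ε * ‖z‖ ≤ z.im})
      (𝓝 (-(c : ℂ)))

/-- The class `𝓗` of univalent self-maps of the upper half-plane with
hydrodynamic normalization. -/
def ClassH (f : ℂ → ℂ) : Prop :=
  DifferentiableOn ℂ f UHP ∧ InjOn f UHP ∧ MapsTo f UHP UHP ∧ HydroNorm f

/-- The class `𝓘` of maps in `𝓗` symmetric w.r.t. the imaginary axis. -/
def ClassI (f : ℂ → ℂ) : Prop :=
  ClassH f ∧ ∀ z ∈ UHP, f (-(starRingEnd ℂ) z) = -(starRingEnd ℂ) (f z)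

/-- The value range `V_𝓘(z0)`. -/
def VI (z0 : ℂ) : Set ℂ := {w : ℂ | ∃ f : ℂ → ℂ, ClassI f ∧ f z0 = w}

open ComplexConjugate Metric

lemma Complex.re_sqrt_pos {w : ℂ} (hw : w ∈ slitPlane) : 0 < (Complex.sqrt w).re := by
  rw [Complex.sqrt, cpow_inv_two_re, Real.sqrt_pos]
  apply half_pos
  rcases mem_slitPlane_iff.1 hw with hre | him
  · linarith [norm_nonneg w]
  · linarith [abs_re_lt_norm.2 him, neg_abs_le w.re]

lemma Complex.sqrt_conj {w : ℂ} (hw : w ∈ slitPlane) :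
    Complex.sqrt (conj w) = conj (Complex.sqrt w) := by
  simp only [Complex.sqrt, conj_cpow _ _ (slitPlane_arg_ne_pi hw), map_inv₀, map_ofNat]

lemma eq_of_sq_eq_sq_of_mem_UHP {z w : ℂ} (hz : z ∈ UHP) (hw : w ∈ UHP) (h : z ^ 2 = w ^ 2) :
    z = w := by
  rcases sq_eq_sq_iff_eq_or_eq_neg.1 h with h | h
  · exact h
  · have hz' : 0 < z.im := hz
    have hw' : 0 < w.im := hw
    rw [h, neg_im] at hz'
    linarith

lemma ofReal_sub_sq_mem_slitPlane {s : ℝ} (hs : 0 ≤ s) {z : ℂ} (hz : z ∈ UHP) :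
    (s : ℂ) - z ^ 2 ∈ slitPlane := by
  have hy : 0 < z.im := hz
  rw [mem_slitPlane_iff]
  by_cases hx : z.re = 0
  · left
    simp only [sub_re, ofReal_re, sq, mul_re, hx]
    nlinarith
  · right
    have := mul_ne_zero hx hy.ne'
    simp only [sub_im, ofReal_im, sq, mul_im]
    contrapose! this
    linarith

/-- `slitMap s` maps `H` onto `H` minus the vertical slit `(0, i√s]`. -/
def slitMap (s : ℝ) (z : ℂ) : ℂ := I * Complex.sqrt (s - z ^ 2)

section slitMap

variable {s : ℝ}

lemma slitMap_sq (s : ℝ) (z : ℂ) : slitMap s z ^ 2 = z ^ 2 - s := by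
  rw [slitMap, mul_pow, Complex.sqrt, cpow_ofNat_inv_pow, I_sq]
  ring

lemma im_slitMap_pos (hs : 0 ≤ s) {z : ℂ} (hz : z ∈ UHP) : 0 < (slitMap s z).im := by
  simpa [slitMap] using Complex.re_sqrt_pos (ofReal_sub_sq_mem_slitPlane hs hz)

lemma differentiableOn_slitMap (hs : 0 ≤ s) : DifferentiableOn ℂ (slitMap s) UHP := fun z hz =>
  ((differentiableAt_sqrt (ofReal_sub_sq_mem_slitPlane hs hz)).comp z
    (by fun_prop : DifferentiableAt ℂ (fun y : ℂ => (s : ℂ) - y ^ 2) z)).const_mul I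
    |>.differentiableWithinAt

lemma injOn_slitMap : InjOn (slitMap s) UHP := fun z hz w hw h =>
  eq_of_sq_eq_sq_of_mem_UHP hz hw <| by
    have h2 : slitMap s z ^ 2 = slitMap s w ^ 2 := by rw [h]
    rwa [slitMap_sq, slitMap_sq, sub_left_inj] at h2

lemma slitMap_neg_conj (hs : 0 ≤ s) {z : ℂ} (hz : z ∈ UHP) :
    slitMap s (-conj z) = -conj (slitMap s z) := by
  have h : (s : ℂ) - (-conj z) ^ 2 = conj ((s : ℂ) - z ^ 2) := by simp
  rw [slitMap, h, Complex.sqrt_conj (ofReal_sub_sq_mem_slitPlane hs hz), slitMap, map_mul, conj_I]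
  ring

lemma slitMap_I_mul {b : ℝ} (h : 0 ≤ s + b ^ 2) : slitMap s (I * b) = I * √(s + b ^ 2) := by
  have : (s : ℂ) - (I * b) ^ 2 = ((s + b ^ 2 : ℝ) : ℂ) := by
    push_cast
    linear_combination (-(b : ℂ) ^ 2) * I_sq
  rw [slitMap, this, Complex.sqrt_of_nonneg (by exact_mod_cast h), ofReal_re]

end slitMap

/-- Along `‖z‖ → ∞` in a sector, `f z - z = -s / (f z + z)` with `‖f z + z‖ ≥ Im z ≥ ε ‖z‖`,
so `(f z - z) / z → 0` and `z (f z - z) = -s / (2 + (f z - z) / z) → -s / 2`. -/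
lemma hydroNorm_of_sq_eq_sq_sub {f : ℂ → ℂ} {s : ℝ} (hs : 0 ≤ s)
    (hsq : ∀ z ∈ UHP, f z ^ 2 = z ^ 2 - s) (him : ∀ z ∈ UHP, 0 < (f z).im) : HydroNorm f := by
  refine ⟨s / 2, by positivity, fun ε hε => ?_⟩
  set l := comap (fun z : ℂ => ‖z‖) atTop ⊓ 𝓟 {z : ℂ | ε * ‖z‖ ≤ z.im}
  have hnorm : Tendsto (fun z : ℂ => ‖z‖) l atTop := tendsto_comap.mono_left inf_le_left
  have hsec : ∀ᶠ z in l, ε * ‖z‖ ≤ z.im := mem_inf_of_right (mem_principal_self _)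
  have hUHP : ∀ᶠ z in l, z ∈ UHP := by
    filter_upwards [hsec, hnorm.eventually_gt_atTop 0] with z h1 h2
    exact lt_of_lt_of_le (by positivity) h1
  have hprod : ∀ z ∈ UHP, (f z - z) * (f z + z) = -s := fun z hz => by
    linear_combination hsq z hz
  have hsmall : Tendsto (fun z => (f z - z) / z) l (𝓝 0) := by
    have hbound : Tendsto (fun z : ℂ => s / (ε * ‖z‖ ^ 2)) l (𝓝 0) :=
      tendsto_const_nhds.div_atTop
        (((tendsto_pow_atTop two_ne_zero).comp hnorm).const_mul_atTop hε)
    refine squeeze_zero_norm' ?_ hbound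
    filter_upwards [hsec, hUHP] with z hzsec hz
    have hz0 : 0 < ‖z‖ := norm_pos_iff.2 (ne_of_apply_ne im (ne_of_gt hz))
    have hsum : ε * ‖z‖ ≤ ‖f z + z‖ := by
      linarith [him z hz, im_le_norm (f z + z), add_im (f z) z]
    have hnorm_prod : ‖f z - z‖ * ‖f z + z‖ = s := by
      rw [← norm_mul, hprod z hz, norm_neg, norm_real, Real.norm_of_nonneg hs]
    rw [norm_div, div_le_div_iff₀ hz0 (by positivity)]
    calc ‖f z - z‖ * (ε * ‖z‖ ^ 2) = ‖f z - z‖ * (ε * ‖z‖) * ‖z‖ := by ring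
      _ ≤ ‖f z - z‖ * ‖f z + z‖ * ‖z‖ := by gcongr
      _ = s * ‖z‖ := by rw [hnorm_prod]
  have hkey : ∀ᶠ z in l, z * (f z - z) = -s / (2 + (f z - z) / z) := by
    filter_upwards [hUHP] with z hz
    have hz0 : z ≠ 0 := ne_of_apply_ne im (ne_of_gt hz)
    have hsum0 : f z + z ≠ 0 := ne_of_apply_ne im <| by
      rw [add_im, zero_im]; linarith [him z hz, hz.out]
    rw [show 2 + (f z - z) / z = (f z + z) / z by field_simp; ring, div_div_eq_mul_div,
      eq_div_iff hsum0]
    linear_combination z * hprod z hz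
  have hden : Tendsto (fun z => 2 + (f z - z) / z) l (𝓝 2) := by
    simpa using (tendsto_const_nhds (x := (2 : ℂ))).add hsmall
  have hlim : Tendsto (fun z => -(s : ℂ) / (2 + (f z - z) / z)) l (𝓝 (-(s : ℂ) / 2)) :=
    tendsto_const_nhds.div hden two_ne_zero
  rw [ofReal_div, ofReal_ofNat, ← neg_div]
  exact hlim.congr' (hkey.mono fun _ h => h.symm)

def cayley (w z : ℂ) : ℂ := (z - w) / (z - conj w)

def cayleyInv (w u : ℂ) : ℂ := (w - conj w * u) / (1 - u)

section cayley

variable {w z : ℂ}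

lemma normSq_sub_conj (z w : ℂ) :
    normSq (z - conj w) = normSq (z - w) + 4 * (z.im * w.im) := by
  simp only [normSq_apply, sub_re, sub_im, conj_re, conj_im]
  ring

lemma sub_conj_ne_zero (hz : z ∈ UHP) (hw : w ∈ UHP) : z - conj w ≠ 0 := by
  refine ne_of_apply_ne im ?_
  simp only [sub_im, conj_im, zero_im]
  linarith [hz.out, hw.out]

lemma sq_norm_cayley (w z : ℂ) :
    ‖cayley w z‖ ^ 2 = ‖z - w‖ ^ 2 / (‖z - w‖ ^ 2 + 4 * (z.im * w.im)) := by
  rw [cayley, norm_div, div_pow, Complex.sq_norm, Complex.sq_norm, normSq_sub_conj]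

lemma norm_cayley_lt_one (hz : z ∈ UHP) (hw : w ∈ UHP) : ‖cayley w z‖ < 1 := by
  have hp : 0 < z.im * w.im := mul_pos hz hw
  have h : ‖cayley w z‖ ^ 2 < 1 := by
    rw [sq_norm_cayley w z, div_lt_one (by positivity)]
    linarith
  simpa using h

lemma cayleyInv_mem_UHP (hw : w ∈ UHP) {u : ℂ} (hu : ‖u‖ < 1) : cayleyInv w u ∈ UHP := by
  have hu1 : 1 - u ≠ 0 := sub_ne_zero.2 fun h => by simp [← h] at hu
  have hnormSq : normSq u < 1 := by rw [← Complex.sq_norm]; nlinarith [norm_nonneg u]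
  have him : (cayleyInv w u).im = w.im * (1 - normSq u) / normSq (1 - u) := by
    rw [cayleyInv, div_im, ← sub_div]
    congr 1
    simp only [normSq_apply, sub_re, sub_im, mul_re, mul_im, conj_re, conj_im, one_re, one_im]
    ring
  show 0 < (cayleyInv w u).im
  rw [him]
  exact div_pos (mul_pos hw (by linarith)) (normSq_pos.2 hu1)

lemma cayleyInv_cayley (hz : z ∈ UHP) (hw : w ∈ UHP) : cayleyInv w (cayley w z) = z := by
  have hd := sub_conj_ne_zero hz hw
  have hw' : w - conj w ≠ 0 := sub_conj_ne_zero hw hw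
  rw [cayleyInv, cayley, one_sub_div hd, div_div_eq_mul_div, div_eq_iff (by simpa using hw')]
  field_simp
  ring

lemma differentiableOn_cayley (hw : w ∈ UHP) : DifferentiableOn ℂ (cayley w) UHP :=
  fun _ hz => ((differentiableAt_id.sub_const w).div (differentiableAt_id.sub_const _)
    (sub_conj_ne_zero hz hw)).differentiableWithinAt

lemma differentiableOn_cayleyInv (w : ℂ) : DifferentiableOn ℂ (cayleyInv w) (ball 0 1) :=
  fun u hu => (((differentiableAt_const _).sub (differentiableAt_id.const_mul _)).div
    ((differentiableAt_const _).sub differentiableAt_id)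
    (sub_ne_zero.2 fun h => by simp [← h] at hu)).differentiableWithinAt

end cayley

section SchwarzPick

variable {f : ℂ → ℂ} (hd : DifferentiableOn ℂ f UHP) (hm : MapsTo f UHP UHP)
include hd hm

lemma norm_cayley_apply_le {z w : ℂ} (hz : z ∈ UHP) (hw : w ∈ UHP) :
    ‖cayley (f w) (f z)‖ ≤ ‖cayley w z‖ := by
  set g := cayley (f w) ∘ f ∘ cayleyInv w
  have hmaps : MapsTo (cayleyInv w) (ball 0 1) UHP := fun u hu =>
    cayleyInv_mem_UHP hw (mem_ball_zero_iff.1 hu)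
  have hg : DifferentiableOn ℂ g (ball 0 1) :=
    (differentiableOn_cayley (hm hw)).comp (hd.comp (differentiableOn_cayleyInv w) hmaps)
      (hm.comp hmaps)
  have hgmaps : MapsTo g (ball 0 1) (closedBall 0 1) := fun u hu =>
    mem_closedBall_zero_iff.2 (norm_cayley_lt_one (hm (hmaps hu)) (hm hw)).le
  have hg0 : g 0 = 0 := by simp [g, cayleyInv, cayley]
  have := Complex.norm_le_norm_of_mapsTo_ball hg hgmaps hg0 (norm_cayley_lt_one hz hw)
  rwa [show g (cayley w z) = cayley (f w) (f z) by
    simp only [g, Function.comp_apply, cayleyInv_cayley hz hw]] at this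

/-- The Schwarz–Pick lemma on `H`, in terms of `cosh d_H(z, w) = 1 + ‖z - w‖² / (2 Im z Im w)`. -/
lemma sq_norm_sub_div_im_mul_im_le {z w : ℂ} (hz : z ∈ UHP) (hw : w ∈ UHP) :
    ‖f z - f w‖ ^ 2 / ((f z).im * (f w).im) ≤ ‖z - w‖ ^ 2 / (z.im * w.im) := by
  have h := pow_le_pow_left₀ (norm_nonneg _) (norm_cayley_apply_le hd hm hz hw) 2
  have hp : 0 < z.im * w.im := mul_pos hz hw
  have hq : 0 < (f z).im * (f w).im := mul_pos (hm hz) (hm hw)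
  rw [sq_norm_cayley, sq_norm_cayley, div_le_div_iff₀ (by positivity) (by positivity)] at h
  rw [div_le_div_iff₀ hq hp]
  nlinarith

lemma im_mul_mul_im_apply_I_mul_le {z : ℂ} (hz : z ∈ UHP) {R : ℝ} (hR : 0 < R) :
    z.im * R * (f (I * R)).im ≤ (f z).im * (‖z‖ ^ 2 + R ^ 2) := by
  have hw : I * R ∈ UHP := by simpa [UHP] using hR
  have h := sq_norm_sub_div_im_mul_im_le hd hm hz hw
  set v := (f z).im
  set R' := (f (I * R)).im
  have hv : 0 < v := hm hz
  have hR' : 0 < R' := hm hw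
  have him : (v - R') ^ 2 ≤ ‖f z - f (I * R)‖ ^ 2 := by
    simpa using sq_le_sq' (abs_le.1 (abs_im_le_norm (f z - f (I * R)))).1
      (abs_le.1 (abs_im_le_norm (f z - f (I * R)))).2
  have hnorm : ‖z - I * R‖ ^ 2 = ‖z‖ ^ 2 - 2 * z.im * R + R ^ 2 := by
    simp only [Complex.sq_norm, normSq_apply, sub_re, sub_im, mul_re, mul_im, I_re, I_im,
      ofReal_re, ofReal_im]
    ring
  rw [hnorm, div_le_div_iff₀ (mul_pos hv hR') (by simpa using mul_pos hz.out hR)] at h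
  simp only [mul_im, I_re, I_im, ofReal_re, ofReal_im] at h
  have key : R' * (z.im * R * R') ≤ R' * (v * (‖z‖ ^ 2 + R ^ 2)) := by
    nlinarith [mul_le_mul_of_nonneg_right him (mul_pos hz.out hR).le, sq_nonneg v,
      mul_pos hz.out hR]
  exact le_of_mul_le_mul_left key hR'

/-- Julia's lemma at `∞` for a map with angular derivative `1` there. -/
lemma im_le_im_of_tendsto_im_div
    (hlim : Tendsto (fun y : ℝ => (f (I * y)).im / y) atTop (𝓝 1)) {z : ℂ} (hz : z ∈ UHP) :
    z.im ≤ (f z).im := by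
  have hsmall : Tendsto (fun R : ℝ => ‖z‖ ^ 2 / R ^ 2) atTop (𝓝 0) :=
    tendsto_const_nhds.div_atTop (tendsto_pow_atTop two_ne_zero)
  have hbound : ∀ᶠ R : ℝ in atTop,
      z.im * ((f (I * R)).im / R) ≤ (f z).im * (‖z‖ ^ 2 / R ^ 2 + 1) := by
    filter_upwards [eventually_gt_atTop 0] with R hR
    have := im_mul_mul_im_apply_I_mul_le hd hm hz hR
    rw [div_add_one (by positivity), mul_div_assoc', mul_div_assoc', div_le_div_iff₀ hR
      (by positivity)]
    nlinarith
  simpa using le_of_tendsto_of_tendsto (hlim.const_mul _)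
    ((hsmall.add_const 1).const_mul _) hbound

end SchwarzPick

lemma HydroNorm.tendsto_im_apply_I_mul_div {f : ℂ → ℂ} (hf : HydroNorm f) :
    Tendsto (fun y : ℝ => (f (I * y)).im / y) atTop (𝓝 1) := by
  obtain ⟨c, -, hc⟩ := hf
  have haxis : Tendsto (fun y : ℝ => I * y) atTop
      (comap (fun z : ℂ => ‖z‖) atTop ⊓ 𝓟 {z : ℂ | 1 * ‖z‖ ≤ z.im}) := by
    refine tendsto_inf.2 ⟨tendsto_comap_iff.2 (tendsto_id.congr' ?_), tendsto_principal.2 ?_⟩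
    all_goals filter_upwards [eventually_ge_atTop 0] with y hy
    all_goals simp [abs_of_nonneg hy]
  have hre := (continuous_re.tendsto _).comp ((hc 1 one_pos).comp haxis)
  have hquot := hre.div_atTop (tendsto_pow_atTop two_ne_zero)
  have hlim := hquot.const_sub 1
  rw [sub_zero] at hlim
  refine hlim.congr' ?_
  filter_upwards [eventually_gt_atTop 0] with y hy
  simp only [Function.comp_apply, mul_re, mul_im, sub_re, sub_im, I_re, I_im, ofReal_re,
    ofReal_im]
  field_simp
  ring

lemma classI_slitMap {s : ℝ} (hs : 0 ≤ s) : ClassI (slitMap s) :=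
  ⟨⟨differentiableOn_slitMap hs, injOn_slitMap, fun _ hz => im_slitMap_pos hs hz,
    hydroNorm_of_sq_eq_sq_sub hs (fun z _ => slitMap_sq s z) fun _ hz => im_slitMap_pos hs hz⟩,
    fun _ hz => slitMap_neg_conj hs hz⟩

theorem valueRange_ClassI_imaginary_axis (z0 : ℂ) (hz0 : z0 ∈ UHP) (hre : z0.re = 0) :
    VI z0 = {w : ℂ | ∃ t : ℝ, 0 ≤ t ∧ w = z0 + Complex.I * (t : ℂ)} := by
  have hz0_eq : z0 = I * z0.im := Complex.ext (by simp [hre]) (by simp)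
  ext w
  constructor
  · rintro ⟨f, ⟨⟨hd, -, hm, hnorm⟩, hsym⟩, rfl⟩
    have hre_f : (f z0).re = 0 := by
      have h := congrArg re (hsym z0 hz0)
      rw [show -conj z0 = z0 from Complex.ext (by simp [hre]) (by simp)] at h
      simp only [neg_re, conj_re] at h
      linarith
    have him := im_le_im_of_tendsto_im_div hd hm hnorm.tendsto_im_apply_I_mul_div hz0
    exact ⟨(f z0).im - z0.im, sub_nonneg.2 him, Complex.ext (by simp [hre, hre_f]) (by simp)⟩
  · rintro ⟨t, ht, rfl⟩
    set b := z0.im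
    have hb : 0 < b := hz0
    refine ⟨slitMap (t ^ 2 + 2 * t * b), classI_slitMap (by positivity), ?_⟩
    have hsq : t ^ 2 + 2 * t * b + b ^ 2 = (b + t) ^ 2 := by ring
    rw [hz0_eq, slitMap_I_mul (by positivity), hsq, Real.sqrt_sq (by positivity)]
    push_cast
    ring
end
end

section
/- Let z0 ∈ (−1,0) ∪ (0,1) be a nonzero real point of the unit disc D. Then V_𝒰(z0) ∪ {0} equals the closed real segment with endpoints 0 and z0. -/
open Complex Set Filter Topology

noncomputable section

/-- The open unit disc. -/
def uDisc : Set ℂ := {z : ℂ | ‖z‖ < 1}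

/-- The holomorphic branch of the square root with `√1 = 1` (principal branch). -/
def csqrt (z : ℂ) : ℂ := z ^ (1/2 : ℂ)

/-- `f` has only real Taylor coefficients at `0`, expressed by the symmetry
`f(conj z) = conj (f z)` on the unit disc. -/
def RealCoeffs (f : ℂ → ℂ) : Prop :=
  ∀ z ∈ uDisc, f ((starRingEnd ℂ) z) = (starRingEnd ℂ) (f z)

/-- The class `𝒰` of univalent self-maps of the unit disc with `f(0) = 0`,
`f'(0) > 0` and real Taylor coefficients. -/
def ClassU (f : ℂ → ℂ) : Prop :=
  DifferentiableOn ℂ f uDisc ∧ InjOn f uDisc ∧ MapsTo f uDisc uDisc ∧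
    f 0 = 0 ∧ 0 < (deriv f 0).re ∧ (deriv f 0).im = 0 ∧ RealCoeffs f

/-- The value range `V_𝒰(z0)`. -/
def VU (z0 : ℂ) : Set ℂ := {w : ℂ | ∃ f : ℂ → ℂ, ClassU f ∧ f z0 = w}

/-!
By the Schwarz lemma `|f x| ≤ |x|`. Real coefficients make `f` real on `(-1, 1)`, where it is
then continuous and injective, hence strictly monotone, and increasing because `f'(0) > 0`.
So `f x` lies between `0 = f 0` and `x`. Conversely every point `θ x`, `0 < θ ≤ 1`, is attained
by the dilation `z ↦ θ z`.
-/

lemma uDisc_eq_ball : uDisc = Metric.ball (0 : ℂ) 1 := by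
  ext z
  simp [uDisc]

lemma ofReal_mem_uDisc {x : ℝ} (hx : x ∈ Ioo (-1) 1) : (x : ℂ) ∈ uDisc := by
  simpa [uDisc] using abs_lt.2 hx

lemma segment_ofReal (a b : ℝ) : segment ℝ (a : ℂ) (b : ℂ) = ofReal '' uIcc a b := by
  rw [← segment_eq_uIcc]
  exact (image_segment ℝ ofRealCLM.toLinearMap.toAffineMap a b).symm

lemma ContinuousOn.strictMonoOn_of_injOn_of_hasDerivAt_pos {g : ℝ → ℝ} {a b c g' : ℝ}
    (hcont : ContinuousOn g (Ioo a b)) (hinj : InjOn g (Ioo a b)) (hc : c ∈ Ioo a b)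
    (hg : HasDerivAt g g' c) (hpos : 0 < g') : StrictMonoOn g (Ioo a b) := by
  refine (hcont.strictMonoOn_of_injOn_Ioo (hc.1.trans hc.2) hinj).resolve_right fun hanti => ?_
  have hacc : AccPt c (𝓟 (Ioo a b)) := isOpen_Ioo.preperfect c hc
  exact hpos.not_ge (hg.hasDerivWithinAt.nonpos_of_antitoneOn hacc hanti.antitoneOn)

lemma RealCoeffs.ofReal_re_apply {f : ℂ → ℂ} (hf : RealCoeffs f) {x : ℝ}
    (hx : (x : ℂ) ∈ uDisc) : ((f x).re : ℂ) = f x :=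
  conj_eq_iff_re.mp (by simpa using (hf x hx).symm)

namespace ClassU

variable {f : ℂ → ℂ} (hf : ClassU f)
include hf

lemma norm_apply_le {z : ℂ} (hz : z ∈ uDisc) : ‖f z‖ ≤ ‖z‖ := by
  obtain ⟨hdiff, -, hmaps, hf0, -⟩ := hf
  rw [uDisc_eq_ball] at hdiff hmaps hz
  exact Complex.norm_le_norm_of_mapsTo_ball hdiff
    (hmaps.mono_right Metric.ball_subset_closedBall) hf0 (mem_ball_zero_iff.mp hz)

lemma strictMonoOn_re : StrictMonoOn (fun x : ℝ => (f x).re) (Ioo (-1) 1) := by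
  obtain ⟨hdiff, hinj, -, -, hderiv, -, hreal⟩ := hf
  have hmaps : MapsTo ((↑) : ℝ → ℂ) (Ioo (-1) 1) uDisc := fun x hx => ofReal_mem_uDisc hx
  have hcont : ContinuousOn (fun x : ℝ => (f x).re) (Ioo (-1) 1) :=
    continuous_re.comp_continuousOn (hdiff.continuousOn.comp continuous_ofReal.continuousOn hmaps)
  have hinj_re : InjOn (fun x : ℝ => (f x).re) (Ioo (-1) 1) := fun x hx y hy hxy => by
    have hfxy : f x = f y := by
      rw [← hreal.ofReal_re_apply (hmaps hx), ← hreal.ofReal_re_apply (hmaps hy)]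
      exact congrArg ofReal hxy
    exact_mod_cast hinj (hmaps hx) (hmaps hy) hfxy
  have hdiff0 : HasDerivAt f (deriv f 0) ((0 : ℝ) : ℂ) := by
    rw [ofReal_zero]
    exact (hdiff.differentiableAt (uDisc_eq_ball ▸ Metric.ball_mem_nhds 0 one_pos)).hasDerivAt
  exact hcont.strictMonoOn_of_injOn_of_hasDerivAt_pos hinj_re (by norm_num)
    hdiff0.real_of_complex hderiv

lemma apply_mem_segment {x : ℝ} (hx : x ∈ Ioo (-1) 1) : f x ∈ segment ℝ 0 (x : ℂ) := by
  obtain ⟨-, -, -, hf0, -, -, hreal⟩ := id hf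
  have hfx := hreal.ofReal_re_apply (ofReal_mem_uDisc hx)
  have habs : |(f x).re| ≤ |x| := by
    have := hf.norm_apply_le (ofReal_mem_uDisc hx)
    rwa [← hfx, norm_real, norm_real, Real.norm_eq_abs, Real.norm_eq_abs] at this
  have hre0 : (f (0 : ℝ)).re = 0 := by rw [ofReal_zero, hf0, zero_re]
  have hmono := hf.strictMonoOn_re.monotoneOn
  have h0 : (0 : ℝ) ∈ Ioo (-1) 1 := by norm_num
  rw [← ofReal_zero, segment_ofReal, ← hfx]
  refine mem_image_of_mem _ ?_
  rcases le_total 0 x with hx0 | hx0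
  · rw [uIcc_of_le hx0]
    exact ⟨hre0 ▸ hmono h0 hx hx0, by linarith [le_abs_self (f x).re, abs_of_nonneg hx0]⟩
  · rw [uIcc_of_ge hx0]
    exact ⟨by linarith [neg_abs_le (f x).re, abs_of_nonpos hx0], hre0 ▸ hmono hx h0 hx0⟩

end ClassU

lemma classU_const_mul {θ : ℝ} (hθ : θ ∈ Ioc 0 1) : ClassU fun z => (θ : ℂ) * z := by
  have hθ0 : (θ : ℂ) ≠ 0 := ofReal_ne_zero.mpr hθ.1.ne'
  have hderiv : deriv (fun z : ℂ => (θ : ℂ) * z) 0 = θ := by simp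
  refine ⟨(differentiable_id.const_mul _).differentiableOn,
    fun a _ b _ hab => mul_left_cancel₀ hθ0 hab, fun z hz => ?_, mul_zero _,
    by simpa [hderiv] using hθ.1, by simp [hderiv], fun z _ => by simp⟩
  simp only [uDisc, mem_ofPred_eq, norm_mul, norm_real, Real.norm_eq_abs, abs_of_pos hθ.1]
    at hz ⊢
  nlinarith [norm_nonneg z, hθ.2]

lemma smul_mem_VU {θ : ℝ} (hθ : θ ∈ Ioc 0 1) (z : ℂ) : θ • z ∈ VU z :=
  ⟨_, classU_const_mul hθ, (real_smul).symm⟩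

theorem valueRange_ClassU_real_general (z0 : ℝ) (h1 : -1 < z0) (h2 : z0 < 1) :
    VU (z0 : ℂ) ∪ {0} = segment ℝ (0 : ℂ) (z0 : ℂ) := by
  refine Subset.antisymm ?_ ?_
  · rintro w (⟨f, hf, rfl⟩ | rfl)
    · exact hf.apply_mem_segment ⟨h1, h2⟩
    · exact left_mem_segment ℝ _ _
  · rw [segment_eq_image']
    rintro _ ⟨θ, hθ, rfl⟩
    rcases hθ.1.eq_or_lt with rfl | hθ0
    · right
      simp
    · left
      simpa using smul_mem_VU ⟨hθ0, hθ.2⟩ (z0 : ℂ)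

theorem valueRange_ClassU_real (z0 : ℝ) (h1 : -1 < z0) (h2 : z0 < 1) (h0 : z0 ≠ 0) :
    VU (z0 : ℂ) ∪ {0} = segment ℝ (0 : ℂ) (z0 : ℂ) :=
  valueRange_ClassU_real_general z0 h1 h2
end
end
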